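/- arXiv:math/0607598 — 3 statements merged into one kernel-verified Lean document; each statement's English description precedes it below -/
import Mathlib

section
/- Let f be a quasiperiodically forced circle homeomorphism over an irrational ω with lift F whose fibered rotation number is 0, and suppose there exists an F-invariant strip. Suppose further that for some ε > 0 the fibered rotation numbers of both F_ε and F_{−ε} equal 0. Then there exist an integer N ≥ 1 and continuous curves γ⁻, γ⁺ : T¹ → ℝ with γ⁻(θ) < γ⁺(θ) for all θ, such that for every θ ∈ T¹ one has γ⁻(θ+Nω) < F^N_θ(γ⁻(θ)) and F^N_θ(γ⁺(θ)) < γ⁺(θ+Nω); in other words, the N-th iterate of F maps the compact region {(θ,x) : γ⁻(θ) ≤ x ≤ γ⁺(θ)} into its own interior. -/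
open Filter Topology MeasureTheory
open scoped ENNReal

noncomputable section

/-- The circle `T¹ = ℝ/ℤ`. -/
abbrev T1 := AddCircle (1 : ℝ)

/-- Fiberwise iterate of the skew product: `fiberIter ω F n θ x = F^n_θ(x)`. -/
def fiberIter (ω : ℝ) (F : T1 → ℝ → ℝ) : ℕ → T1 → ℝ → ℝ
  | 0, _, x => x
  | n + 1, θ, x => fiberIter ω F n (θ + (ω : T1)) (F θ x)

/-- `F` is (the fiber part of) a lift of a quasiperiodically forced circle homeomorphism
over `ω`: `F(θ,x) = (θ+ω, F_θ(x))`, each `F_θ` a strictly increasing homeomorphism of `ℝ`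
commuting with `x ↦ x+1`. -/
structure IsQpfLift (ω : ℝ) (F : T1 → ℝ → ℝ) : Prop where
  cont : Continuous fun p : T1 × ℝ => F p.1 p.2
  mono : ∀ θ, StrictMono (F θ)
  surj : ∀ θ, Function.Surjective (F θ)
  per  : ∀ θ x, F θ (x + 1) = F θ x + 1

/-- `ρ` is the fibered rotation number of the lift `F`. -/
def HasRotNum (ω : ℝ) (F : T1 → ℝ → ℝ) (ρ : ℝ) : Prop :=
  ∀ θ x, Tendsto (fun n : ℕ => (fiberIter ω F n θ x - x) / n) atTop (𝓝 ρ)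

/-- The skew-product map on `T¹ × ℝ` induced by the (fiber part of the) lift. -/
def skew (ω : ℝ) (F : T1 → ℝ → ℝ) : T1 × ℝ → T1 × ℝ :=
  fun p => (p.1 + (ω : T1), F p.1 p.2)

/-- An `F`-invariant strip: a compact invariant set all of whose fibers are nonempty
compact intervals. -/
def IsInvStrip (ω : ℝ) (F : T1 → ℝ → ℝ) (A : Set (T1 × ℝ)) : Prop :=
  IsCompact A ∧ skew ω F '' A = A ∧
    ∀ θ : T1, ∃ a b : ℝ, a ≤ b ∧ {x : ℝ | (θ, x) ∈ A} = Set.Icc a b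


/-!
Take `N = 1`. The invariant strip bounds the displacement `F^n_θ(x) - x`. If the displacement of
`G = F + ε` were unbounded above, a region where some `G^{n₀}` gains a lot would be revisited by
the irrational rotation within bounded time, forcing a positive rotation number; so `G` has
bounded displacement, and the supremum `ψ` of the graph transforms of the zero curve under `G` is
a bounded lower semicontinuous curve with `F_θ(ψ θ) + ε ≤ ψ(θ + ω)`. By Baire, `ψ` oscillates
little on some ball; a continuous `h ≥ ψ` that is constant on that ball has, at every point, a
graph transform under `F + ε/2` from within bounded time lying below `ψ ≤ h`. The minimum of
these finitely many graph transforms is the upper curve. Reflecting by `x ↦ -x` exchanges the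
roles of `F + ε` and `F - ε` and gives the lower curve, which an integer shift puts below the
upper one.
-/
open Set

namespace CircleDeg1Lift

theorem map_sub_self_lt (f : CircleDeg1Lift) (x : ℝ) : f x - x < f 0 + 1 := by
  linarith [f.map_le_of_map_zero x, Int.ceil_lt_add_one x]

theorem map_zero_sub_one_lt (f : CircleDeg1Lift) (x : ℝ) : f 0 - 1 < f x - x := by
  linarith [f.le_map_of_map_zero x, Int.sub_one_lt_floor x]

end CircleDeg1Lift

section fiberIter

variable {ω : ℝ} {F G : T1 → ℝ → ℝ}

@[simp]
theorem fiberIter_one (θ : T1) (x : ℝ) : fiberIter ω F 1 θ x = F θ x :=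
  rfl

theorem fiberIter_succ' (n : ℕ) (θ : T1) (x : ℝ) :
    fiberIter ω F (n + 1) θ x = F (θ + n • (ω : T1)) (fiberIter ω F n θ x) := by
  induction n generalizing θ x with
  | zero => simp [fiberIter]
  | succ n ih => rw [fiberIter, ih, fiberIter, add_assoc, ← succ_nsmul']

theorem fiberIter_add (n m : ℕ) (θ : T1) (x : ℝ) :
    fiberIter ω F (n + m) θ x = fiberIter ω F m (θ + n • (ω : T1)) (fiberIter ω F n θ x) := by
  induction n generalizing θ x with
  | zero => simp [fiberIter]
  | succ n ih => rw [Nat.succ_add, fiberIter, ih, fiberIter, succ_nsmul', add_assoc]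

theorem fiberIter_le_fiberIter (hFG : ∀ θ x, F θ x ≤ G θ x) (hG : ∀ θ, Monotone (G θ))
    (n : ℕ) (θ : T1) (x : ℝ) : fiberIter ω F n θ x ≤ fiberIter ω G n θ x := by
  induction n generalizing θ x with
  | zero => rfl
  | succ n ih =>
    rw [fiberIter_succ', fiberIter_succ']
    exact (hFG _ _).trans (hG _ (ih θ x))

theorem fiberIter_neg_conj (n : ℕ) (θ : T1) (x : ℝ) :
    fiberIter ω (fun θ x => -F θ (-x)) n θ x = -fiberIter ω F n θ (-x) := by
  induction n generalizing θ x with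
  | zero => simp [fiberIter]
  | succ n ih => simp only [fiberIter, ih, neg_neg]

end fiberIter

namespace IsQpfLift

variable {ω : ℝ} {F : T1 → ℝ → ℝ}

theorem add_const (hF : IsQpfLift ω F) (c : ℝ) : IsQpfLift ω (fun θ x => F θ x + c) where
  cont := hF.cont.add continuous_const
  mono θ := (hF.mono θ).add_const c
  surj θ y := (hF.surj θ (y - c)).imp fun x hx => by simp [hx]
  per θ x := by simp [hF.per, add_right_comm]

theorem neg_conj (hF : IsQpfLift ω F) : IsQpfLift ω (fun θ x => -F θ (-x)) where
  cont := (hF.cont.comp (continuous_fst.prodMk continuous_snd.neg)).neg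
  mono θ _ _ hxy := neg_lt_neg (hF.mono θ (neg_lt_neg hxy))
  surj θ y := by
    obtain ⟨x, hx⟩ := hF.surj θ (-y)
    exact ⟨-x, by simp [hx]⟩
  per θ x := by
    have := hF.per θ (-(x + 1))
    rw [show -(x + 1) + 1 = -x by ring] at this
    linarith

theorem fiberIter_monotone (hF : IsQpfLift ω F) (n : ℕ) (θ : T1) :
    Monotone (fiberIter ω F n θ) := by
  induction n generalizing θ with
  | zero => exact monotone_id
  | succ n ih => exact (ih _).comp (hF.mono θ).monotone

theorem fiberIter_add_one (hF : IsQpfLift ω F) (n : ℕ) (θ : T1) (x : ℝ) :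
    fiberIter ω F n θ (x + 1) = fiberIter ω F n θ x + 1 := by
  induction n generalizing θ x with
  | zero => rfl
  | succ n ih => simp only [fiberIter, hF.per, ih]

def fiberLift (hF : IsQpfLift ω F) (n : ℕ) (θ : T1) : CircleDeg1Lift :=
  ⟨⟨fiberIter ω F n θ, hF.fiberIter_monotone n θ⟩, hF.fiberIter_add_one n θ⟩

@[simp]
theorem fiberLift_apply (hF : IsQpfLift ω F) (n : ℕ) (θ : T1) (x : ℝ) :
    hF.fiberLift n θ x = fiberIter ω F n θ x :=
  rfl

theorem continuous_fiberIter (hF : IsQpfLift ω F) (n : ℕ) :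
    Continuous fun p : T1 × ℝ => fiberIter ω F n p.1 p.2 := by
  induction n with
  | zero => exact continuous_snd
  | succ n ih => exact ih.comp ((continuous_fst.add continuous_const).prodMk hF.cont)

theorem exists_pos_map_add_lt (hF : IsQpfLift ω F) {ε : ℝ} (hε : 0 < ε) :
    ∃ η > 0, ∀ θ x, F θ (x + η) < F θ x + ε := by
  have hK : IsCompact ((univ : Set T1) ×ˢ Icc (0 : ℝ) 2) := isCompact_univ.prod isCompact_Icc
  obtain ⟨δ, hδ, hδF⟩ := Metric.uniformContinuousOn_iff.mp
    (hK.uniformContinuousOn_of_continuous hF.cont.continuousOn) ε hε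
  set η := min (δ / 2) 1
  have hη0 : 0 < η := by positivity
  have hη1 : η ≤ 1 := min_le_right _ _
  have hηδ : η < δ := (min_le_left _ _).trans_lt (half_lt_self hδ)
  refine ⟨η, hη0, fun θ x => ?_⟩
  -- by periodicity it suffices to compare `F θ` at `fract x + η` and at `fract x`
  have hfract := Int.fract_lt_one x
  have hclose := hδF (θ, Int.fract x + η) ⟨trivial, by positivity, by linarith⟩
    (θ, Int.fract x) ⟨trivial, Int.fract_nonneg x, by linarith⟩
    (by simpa [Prod.dist_eq, abs_of_pos hη0] using ⟨hδ, hηδ⟩)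
  have hshift (y : ℝ) : F θ (y + ⌊x⌋) = F θ y + ⌊x⌋ := (hF.fiberLift 1 θ).map_add_int y ⌊x⌋
  rw [Real.dist_eq, abs_lt] at hclose
  calc F θ (x + η) = F θ (Int.fract x + η) + ⌊x⌋ := by rw [← hshift, Int.fract]; ring_nf
    _ < F θ (Int.fract x) + ⌊x⌋ + ε := by linarith
    _ = F θ x + ε := by rw [← hshift, Int.fract_add_floor]

end IsQpfLift

namespace IsInvStrip

variable {ω : ℝ} {F : T1 → ℝ → ℝ} {A : Set (T1 × ℝ)}

theorem fiberIter_mem (hA : IsInvStrip ω F A) (n : ℕ) {θ : T1} {x : ℝ} (hx : (θ, x) ∈ A) :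
    (θ + n • (ω : T1), fiberIter ω F n θ x) ∈ A := by
  induction n generalizing θ x with
  | zero => simpa [fiberIter] using hx
  | succ n ih =>
    have hstep : (θ + ω, F θ x) ∈ A := hA.2.1 ▸ mem_image_of_mem (skew ω F) hx
    simpa [fiberIter, succ_nsmul', add_assoc] using ih hstep

theorem exists_abs_fiberIter_sub_le (hA : IsInvStrip ω F A) (hF : IsQpfLift ω F) :
    ∃ C, ∀ n θ x, |fiberIter ω F n θ x - x| ≤ C := by
  obtain ⟨R, hR⟩ := hA.1.exists_bound_of_continuousOn continuous_snd.continuousOn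
  refine ⟨2 * R + 2, fun n θ x => ?_⟩
  obtain ⟨a, b, hab, hfiber⟩ := hA.2.2 θ
  have ha : (θ, a) ∈ A := by
    change a ∈ {x : ℝ | (θ, x) ∈ A}
    rw [hfiber]
    exact left_mem_Icc.mpr hab
  have hRa : |a| ≤ R := hR _ ha
  have hRna : |fiberIter ω F n θ a| ≤ R := hR _ (hA.fiberIter_mem n ha)
  have hx₁ := (hF.fiberLift n θ).map_sub_self_lt x
  have hx₂ := (hF.fiberLift n θ).map_zero_sub_one_lt x
  have ha₁ := (hF.fiberLift n θ).map_sub_self_lt a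
  have ha₂ := (hF.fiberLift n θ).map_zero_sub_one_lt a
  simp only [IsQpfLift.fiberLift_apply] at hx₁ hx₂ ha₁ ha₂
  rw [abs_le] at hRa hRna ⊢
  constructor <;> linarith

end IsInvStrip

theorem exists_nsmul_add_mem_of_irrational {ω : ℝ} (hω : Irrational ω) {U : Set T1}
    (hU : IsOpen U) (hne : U.Nonempty) :
    ∃ L : ℕ, ∀ θ : T1, ∃ j ∈ Finset.Icc 1 L, θ + j • (ω : T1) ∈ U := by
  have hdense : DenseRange fun n : ℤ => n • (ω : T1) :=
    AddCircle.denseRange_zsmul_coe_iff.mpr (by simpa using hω)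
  have hvisit (θ : T1) : ∃ j, 1 ≤ j ∧ θ + j • (ω : T1) ∈ U := by
    obtain ⟨u, hu⟩ := hne
    have hclust : MapClusterPt (u - θ) atTop fun n : ℕ => n • (ω : T1) :=
      ((mapClusterPt_atTop_nsmul_tfae _ _).out 0 3).mpr (hdense.closure_range ▸ mem_univ _)
    have hfreq := hclust.frequently
      ((hU.preimage (continuous_const_add θ)).mem_nhds (by simpa using hu))
    obtain ⟨j, hjU, hj⟩ := (hfreq.and_eventually (eventually_ge_atTop 1)).exists
    exact ⟨j, hj, hjU⟩
  obtain ⟨L, hL⟩ := isCompact_univ.elim_directed_cover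
    (fun L : ℕ => ⋃ j ∈ Finset.Icc 1 L, (· + j • (ω : T1)) ⁻¹' U)
    (fun L => isOpen_biUnion fun j _ => hU.preimage (continuous_add_const _))
    (fun θ _ => by
      obtain ⟨j, hj, hjU⟩ := hvisit θ
      exact mem_iUnion.mpr ⟨j, mem_biUnion (Finset.mem_Icc.mpr ⟨hj, le_rfl⟩) hjU⟩)
    (Monotone.directed_le fun _ _ hLL' => biUnion_subset_biUnion_left
      (Finset.coe_subset.mpr (Finset.Icc_subset_Icc_right hLL')))
  exact ⟨L, fun θ => by simpa using hL (mem_univ θ)⟩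

section RotationNumber

variable {ω : ℝ} {G : T1 → ℝ → ℝ}

theorem add_nat_le_fiberIter_mul {M : ℕ} (h : ∀ θ y, y + 1 ≤ fiberIter ω G M θ y) (k : ℕ)
    (θ : T1) (y : ℝ) : y + k ≤ fiberIter ω G (k * M) θ y := by
  induction k with
  | zero => simp [fiberIter]
  | succ k ih =>
    rw [Nat.succ_mul, fiberIter_add]
    push_cast
    linarith [h (θ + (k * M) • (ω : T1)) (fiberIter ω G (k * M) θ y)]

theorem HasRotNum.one_div_le {ρ : ℝ} (hρ : HasRotNum ω G ρ) {M : ℕ} (hM : 0 < M)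
    (h : ∀ θ y, y + 1 ≤ fiberIter ω G M θ y) : 1 / (M : ℝ) ≤ ρ := by
  have hlim : Tendsto (fun k : ℕ => (fiberIter ω G (k * M) 0 0 - 0) / ((k * M : ℕ) : ℝ)) atTop
      (𝓝 ρ) :=
    (hρ 0 0).comp (tendsto_atTop_mono (fun k => Nat.le_mul_of_pos_right k hM) tendsto_id)
  refine ge_of_tendsto hlim ((eventually_ge_atTop 1).mono fun k hk => ?_)
  have hk' : (1 : ℝ) ≤ k := by exact_mod_cast hk
  have hgrowth := add_nat_le_fiberIter_mul h k 0 0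
  rw [div_le_div_iff₀ (by positivity) (by positivity)]
  push_cast
  nlinarith

namespace IsQpfLift

theorem exists_add_one_le_fiberIter (hω : Irrational ω) (hG : IsQpfLift ω G) {C : ℝ}
    (hC : ∀ n θ x, x - C ≤ fiberIter ω G n θ x) {n₀ : ℕ} {θ₀ : T1}
    (h₀ : 2 * C + 2 < fiberIter ω G n₀ θ₀ 0) :
    ∃ M, 0 < M ∧ ∀ θ y, y + 1 ≤ fiberIter ω G M θ y := by
  have hU : IsOpen {θ | 2 * C + 2 < fiberIter ω G n₀ θ 0} :=
    isOpen_lt continuous_const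
      ((hG.continuous_fiberIter n₀).comp (continuous_id.prodMk continuous_const))
  obtain ⟨L, hL⟩ := exists_nsmul_add_mem_of_irrational hω hU ⟨θ₀, h₀⟩
  obtain ⟨j₀, hj₀, -⟩ := hL θ₀
  refine ⟨L + n₀, by rw [Finset.mem_Icc] at hj₀; omega, fun θ y => ?_⟩
  obtain ⟨j, hj, hjU⟩ := hL θ
  simp only [Finset.mem_Icc] at hj
  set z := fiberIter ω G j θ y
  -- a visit to `U` followed by `n₀` steps gains more than `2C + 1`, which absorbs two losses of `C`
  have hgain := (hG.fiberLift n₀ (θ + j • (ω : T1))).map_zero_sub_one_lt z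
  simp only [fiberLift_apply] at hgain
  rw [show L + n₀ = (j + n₀) + (L - j) by omega, fiberIter_add, fiberIter_add j n₀]
  linarith [hC j θ y, hC (L - j) (θ + (j + n₀) • (ω : T1)) (fiberIter ω G n₀ (θ + j • (ω : T1)) z),
    show 2 * C + 2 < fiberIter ω G n₀ (θ + j • (ω : T1)) 0 from hjU]

theorem exists_fiberIter_le_add (hω : Irrational ω) (hG : IsQpfLift ω G) {C : ℝ}
    (hC : ∀ n θ x, x - C ≤ fiberIter ω G n θ x) (hρ : HasRotNum ω G 0) :
    ∃ K, ∀ n θ x, fiberIter ω G n θ x ≤ x + K := by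
  have hzero : ∀ n θ, fiberIter ω G n θ 0 ≤ 2 * C + 2 := by
    by_contra! ⟨n₀, θ₀, h₀⟩
    obtain ⟨M, hM, hstep⟩ := hG.exists_add_one_le_fiberIter hω hC h₀
    have := hρ.one_div_le hM hstep
    have : (0 : ℝ) < 1 / M := by positivity
    linarith
  refine ⟨2 * C + 3, fun n θ x => ?_⟩
  have := (hG.fiberLift n θ).map_sub_self_lt x
  simp only [fiberLift_apply] at this
  linarith [hzero n θ]

end IsQpfLift

end RotationNumber

section GraphTransform

variable {ω : ℝ} {F G : T1 → ℝ → ℝ}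

/-- The curve whose graph is the image of the graph of `h` under the `j`-th iterate of the
skew product. -/
def graphTransform (ω : ℝ) (F : T1 → ℝ → ℝ) (j : ℕ) (h : T1 → ℝ) (θ : T1) : ℝ :=
  fiberIter ω F j (θ - j • (ω : T1)) (h (θ - j • (ω : T1)))

@[simp]
theorem graphTransform_zero (h : T1 → ℝ) : graphTransform ω F 0 h = h := by
  ext θ
  simp [graphTransform, fiberIter]

theorem graphTransform_succ_add (j : ℕ) (h : T1 → ℝ) (θ : T1) :
    graphTransform ω F (j + 1) h (θ + ω) = F θ (graphTransform ω F j h θ) := by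
  have hbase : θ + (ω : T1) - (j + 1) • (ω : T1) = θ - j • (ω : T1) := by
    rw [succ_nsmul]; abel
  rw [graphTransform, hbase, fiberIter_succ', sub_add_cancel, graphTransform]

theorem IsQpfLift.continuous_graphTransform (hF : IsQpfLift ω F) {h : T1 → ℝ}
    (hh : Continuous h) (j : ℕ) : Continuous (graphTransform ω F j h) := by
  have hbase : Continuous fun θ : T1 => θ - j • (ω : T1) := continuous_sub_right _
  exact (hF.continuous_fiberIter j).comp (hbase.prodMk (hh.comp hbase))

theorem IsQpfLift.continuous_map (hF : IsQpfLift ω F) (θ : T1) : Continuous (F θ) :=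
  hF.cont.comp (continuous_const.prodMk continuous_id)

/-- The supremum of all graph transforms of the zero curve. -/
theorem IsQpfLift.exists_lowerSemicontinuous_subinvariant (hG : IsQpfLift ω G) {K : ℝ}
    (hK : ∀ n θ x, fiberIter ω G n θ x ≤ x + K) :
    ∃ ψ : T1 → ℝ, LowerSemicontinuous ψ ∧ (∀ θ, 0 ≤ ψ θ ∧ ψ θ ≤ K) ∧
      ∀ θ, G θ (ψ θ) ≤ ψ (θ + ω) := by
  set p : ℕ → T1 → ℝ := fun j => graphTransform ω G j 0
  have hpK (j : ℕ) (θ : T1) : p j θ ≤ K := by simpa [p, graphTransform] using hK j _ 0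
  have hbdd (θ : T1) : BddAbove (range fun j => p j θ) :=
    ⟨K, forall_mem_range.mpr fun j => hpK j θ⟩
  refine ⟨fun θ => ⨆ j, p j θ, lowerSemicontinuous_ciSup hbdd fun j =>
    (hG.continuous_graphTransform continuous_const j).lowerSemicontinuous,
    fun θ => ⟨le_ciSup_of_le (hbdd θ) 0 (by simp [p]), ciSup_le (hpK · θ)⟩, fun θ => ?_⟩
  rw [Monotone.map_ciSup_of_continuousAt (hG.continuous_map θ).continuousAt
    (hG.mono θ).monotone (hbdd θ)]
  refine ciSup_le fun j => ?_
  rw [show G θ (p j θ) = p (j + 1) (θ + ω) from (graphTransform_succ_add j 0 θ).symm]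
  exact le_ciSup (hbdd _) (j + 1)

end GraphTransform

theorem LowerSemicontinuous.exists_isOpen_forall_mem_Ioc {X : Type*} [TopologicalSpace X]
    [BaireSpace X] [Nonempty X] {f : X → ℝ} (hf : LowerSemicontinuous f) (hf0 : ∀ x, 0 ≤ f x)
    {η : ℝ} (hη : 0 < η) :
    ∃ U : Set X, IsOpen U ∧ U.Nonempty ∧ ∃ c, ∀ x ∈ U, f x ∈ Ioc (c - η) c := by
  classical
  set S : ℕ → Set X := fun k => f ⁻¹' Iic (k * η)
  have hS : ∃ k, (interior (S k)).Nonempty :=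
    nonempty_interior_of_iUnion_of_closed (fun k => hf.isClosed_preimage _) <|
      eq_univ_of_forall fun x => mem_iUnion.mpr <|
        (exists_nat_ge (f x / η)).imp fun k hk => (div_le_iff₀ hη).mp hk
  -- the first sublevel set with interior
  set k := Nat.find hS
  refine ⟨interior (S k) ∩ f ⁻¹' Ioi (k * η - η), isOpen_interior.inter (hf.isOpen_preimage _),
    ?_, k * η, fun x hx => ⟨hx.2, interior_subset (s := S k) hx.1⟩⟩
  by_contra hempty
  have hsub : ∀ x ∈ interior (S k), f x ≤ k * η - η := fun x hx =>
    not_lt.mp fun hlt => hempty ⟨x, hx, hlt⟩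
  obtain ⟨x₀, hx₀⟩ := Nat.find_spec hS
  obtain ⟨m, hm⟩ : ∃ m, k = m + 1 := Nat.exists_eq_succ_of_ne_zero fun hk0 => by
    have := hsub x₀ hx₀
    rw [hk0, Nat.cast_zero] at this
    linarith [hf0 x₀]
  refine Nat.find_min hS (show m < k by omega) ⟨x₀, interior_maximal (fun x hx => ?_)
    isOpen_interior hx₀⟩
  have := hsub x hx
  rw [hm, Nat.cast_succ] at this
  simp only [S, mem_preimage, mem_Iic]
  linarith

theorem exists_continuous_forall_le_eqOn_const {X : Type*} [TopologicalSpace X] [NormalSpace X]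
    {ψ : X → ℝ} {U s : Set X} {c K : ℝ} (hU : IsOpen U) (hs : IsClosed s) (hsU : s ⊆ U)
    (hψU : ∀ x ∈ U, ψ x ≤ c) (hψK : ∀ x, ψ x ≤ K) :
    ∃ h : X → ℝ, Continuous h ∧ (∀ x, ψ x ≤ h x) ∧ EqOn h (fun _ => c) s := by
  obtain ⟨g, hg0, hg1, hg01⟩ := exists_continuous_zero_one_of_isClosed hs hU.isClosed_compl
    (disjoint_compl_right_iff_subset.mpr hsU)
  refine ⟨fun x => c + max (K - c) 0 * g x, by fun_prop, fun x => ?_, fun x hx => by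
    simp [hg0 hx]⟩
  by_cases hx : x ∈ U
  · nlinarith [hψU x hx, (hg01 x).1, le_max_right (K - c) 0]
  · simp only [hg1 hx, Pi.one_apply, mul_one]
    linarith [hψK x, le_max_left (K - c) 0]

section OneSided

variable {ω : ℝ} {F H : T1 → ℝ → ℝ}

theorem fiberIter_lt_of_map_lt (hH : ∀ θ, Monotone (H θ)) {ψ : T1 → ℝ}
    (hψ : ∀ θ, H θ (ψ θ) < ψ (θ + ω)) {σ : T1} {c : ℝ} (hc : H σ c < ψ (σ + ω)) (j : ℕ) :
    fiberIter ω H (j + 1) σ c < ψ (σ + (j + 1) • (ω : T1)) := by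
  induction j with
  | zero => simpa [fiberIter] using hc
  | succ j ih =>
    rw [fiberIter_succ', succ_nsmul _ (j + 1), ← add_assoc]
    exact (hH _ ih.le).trans_lt (hψ _)

theorem IsQpfLift.exists_continuous_map_le_of_graphTransform_lt (hF : IsQpfLift ω F)
    {h : T1 → ℝ} (hh : Continuous h) {L : ℕ}
    (hL : ∀ θ, ∃ j ∈ Finset.Icc 1 L, graphTransform ω F j h θ < h θ) :
    ∃ γ : T1 → ℝ, Continuous γ ∧ ∀ θ, F θ (γ θ) ≤ γ (θ + ω) := by
  have hne : (Finset.Icc 1 L).Nonempty := let ⟨j, hj, _⟩ := hL 0; ⟨j, hj⟩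
  set γ := fun θ => (Finset.Icc 1 L).inf' hne fun j => graphTransform ω F j h θ
  have hγh (θ : T1) : γ θ ≤ h θ :=
    let ⟨_, hj, hlt⟩ := hL θ
    (Finset.inf'_le _ hj).trans hlt.le
  refine ⟨γ, Continuous.finset_inf'_apply hne fun j _ => hF.continuous_graphTransform hh j,
    fun θ => Finset.le_inf' _ _ fun j hj => ?_⟩
  rw [Finset.mem_Icc] at hj
  obtain ⟨i, rfl⟩ : ∃ i, j = i + 1 := ⟨j - 1, by omega⟩
  rw [graphTransform_succ_add]
  refine (hF.mono θ).monotone ?_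
  rcases i.eq_zero_or_pos with rfl | hi
  · simpa using hγh θ
  · exact Finset.inf'_le _ (Finset.mem_Icc.mpr ⟨hi, by omega⟩)

theorem IsQpfLift.exists_continuous_map_lt_of_lowerSemicontinuous (hω : Irrational ω)
    (hF : IsQpfLift ω F) {ψ : T1 → ℝ} (hψ : LowerSemicontinuous ψ) {K : ℝ}
    (hψK : ∀ θ, 0 ≤ ψ θ ∧ ψ θ ≤ K) {ε : ℝ} (hε : 0 < ε)
    (hinv : ∀ θ, F θ (ψ θ) + ε ≤ ψ (θ + ω)) :
    ∃ γ : T1 → ℝ, Continuous γ ∧ ∀ θ, F θ (γ θ) < γ (θ + ω) := by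
  obtain ⟨η, hη, hFη⟩ := hF.exists_pos_map_add_lt (half_pos hε)
  obtain ⟨U, hU, ⟨θ₁, hθ₁⟩, c, hc⟩ := hψ.exists_isOpen_forall_mem_Ioc (fun θ => (hψK θ).1) hη
  obtain ⟨r, hr, hball⟩ := Metric.isOpen_iff.mp hU θ₁ hθ₁
  obtain ⟨h, hh, hψh, hhc⟩ := exists_continuous_forall_le_eqOn_const hU
    Metric.isClosed_closedBall ((Metric.closedBall_subset_ball (half_lt_self hr)).trans hball)
    (fun θ hθ => (hc θ hθ).2) (fun θ => (hψK θ).2)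
  -- pushing the graph of `h` forward from the ball where `h = c` lands below `ψ`, hence below `h`
  have hcap (σ : T1) (hσ : σ ∈ Metric.closedBall θ₁ (r / 2)) (j : ℕ) :
      fiberIter ω (fun θ x => F θ x + ε / 2) (j + 1) σ (h σ) < ψ (σ + (j + 1) • (ω : T1)) := by
    have hσU : σ ∈ U := hball (Metric.closedBall_subset_ball (half_lt_self hr) hσ)
    rw [hhc hσ]
    refine fiberIter_lt_of_map_lt (fun θ => ((hF.add_const _).mono θ).monotone)
      (fun θ => by linarith [hinv θ]) ?_ j
    have := (hF.mono σ).monotone (show c ≤ ψ σ + η by linarith [(hc σ hσU).1])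
    linarith [hFη σ (ψ σ), hinv σ]
  obtain ⟨L, hL⟩ := exists_nsmul_add_mem_of_irrational hω.neg Metric.isOpen_ball
    (Metric.nonempty_ball.mpr (half_pos hr))
  have hcover (θ : T1) : ∃ j ∈ Finset.Icc 1 L,
      graphTransform ω (fun θ x => F θ x + ε / 2) j h θ < h θ := by
    obtain ⟨j, hj, hjV⟩ := hL θ
    refine ⟨j, hj, ?_⟩
    obtain ⟨i, rfl⟩ : ∃ i, j = i + 1 := ⟨j - 1, by rw [Finset.mem_Icc] at hj; omega⟩
    have hσ : θ - (i + 1) • (ω : T1) ∈ Metric.closedBall θ₁ (r / 2) :=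
      Metric.ball_subset_closedBall (by simpa [sub_eq_add_neg] using hjV)
    have := hcap _ hσ i
    rw [sub_add_cancel] at this
    exact this.trans_le (hψh θ)
  obtain ⟨γ, hγ, hγH⟩ :=
    (hF.add_const (ε / 2)).exists_continuous_map_le_of_graphTransform_lt hh hcover
  exact ⟨γ, hγ, fun θ => by linarith [hγH θ]⟩

end OneSided

theorem HasRotNum.neg_conj {ω ρ : ℝ} {G : T1 → ℝ → ℝ} (h : HasRotNum ω G ρ) :
    HasRotNum ω (fun θ x => -G θ (-x)) (-ρ) := fun θ x => by
  convert (h θ (-x)).neg using 2 with n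
  rw [fiberIter_neg_conj]
  ring

theorem IsQpfLift.exists_continuous_map_lt {ω : ℝ} {F : T1 → ℝ → ℝ} (hω : Irrational ω)
    (hF : IsQpfLift ω F) {C : ℝ} (hC : ∀ n θ x, x - C ≤ fiberIter ω F n θ x) {ε : ℝ}
    (hε : 0 < ε) (hlock : HasRotNum ω (fun θ x => F θ x + ε) 0) :
    ∃ γ : T1 → ℝ, Continuous γ ∧ ∀ θ, F θ (γ θ) < γ (θ + ω) := by
  have hCε (n : ℕ) (θ : T1) (x : ℝ) : x - C ≤ fiberIter ω (fun θ x => F θ x + ε) n θ x :=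
    (hC n θ x).trans <| fiberIter_le_fiberIter (fun θ x => by linarith)
      (fun θ => ((hF.add_const ε).mono θ).monotone) n θ x
  obtain ⟨K, hK⟩ := (hF.add_const ε).exists_fiberIter_le_add hω hCε hlock
  obtain ⟨ψ, hψ, hψK, hinv⟩ := (hF.add_const ε).exists_lowerSemicontinuous_subinvariant hK
  exact hF.exists_continuous_map_lt_of_lowerSemicontinuous hω hψ hψK hε hinv

theorem mode_locking_curves_general
    (ω : ℝ) (hω : Irrational ω)
    (F : T1 → ℝ → ℝ) (hF : IsQpfLift ω F)
    (hstrip : ∃ A : Set (T1 × ℝ), IsInvStrip ω F A)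
    (ε : ℝ) (hε : 0 < ε)
    (hlockp : HasRotNum ω (fun θ x => F θ x + ε) 0)
    (hlockm : HasRotNum ω (fun θ x => F θ x + (-ε)) 0) :
    ∃ (N : ℕ), 1 ≤ N ∧ ∃ γm γp : T1 → ℝ,
      Continuous γm ∧ Continuous γp ∧ (∀ θ, γm θ < γp θ) ∧
      (∀ θ, γm (θ + N • (ω : T1)) < fiberIter ω F N θ (γm θ)) ∧
      (∀ θ, fiberIter ω F N θ (γp θ) < γp (θ + N • (ω : T1))) := by
  obtain ⟨A, hA⟩ := hstrip
  obtain ⟨C, hC⟩ := hA.exists_abs_fiberIter_sub_le hF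
  obtain ⟨γp, hγp, hFγp⟩ := hF.exists_continuous_map_lt hω (C := C)
    (fun n θ x => by linarith [(abs_le.mp (hC n θ x)).1]) hε hlockp
  -- the lower curve is the reflection of an upper curve of the lift reflected by `x ↦ -x`
  obtain ⟨γ, hγ, hFγ⟩ := hF.neg_conj.exists_continuous_map_lt hω (C := C)
    (fun n θ x => by rw [fiberIter_neg_conj]; linarith [(abs_le.mp (hC n θ (-x))).2]) hε
    (by convert hlockm.neg_conj using 1 <;> simp [add_comm])
  obtain ⟨k, hk⟩ : ∃ k : ℤ, ∀ θ, -γ θ - k < γp θ := by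
    obtain ⟨B, hB⟩ := (isCompact_range (hγ.neg.sub hγp)).bddAbove
    obtain ⟨k, hk⟩ := exists_int_gt B
    exact ⟨k, fun θ => by linarith [hB (mem_range_self θ), show (-γ - γp) θ = -γ θ - γp θ from rfl]⟩
  refine ⟨1, le_rfl, fun θ => -γ θ - k, γp, by fun_prop, hγp, hk, fun θ => ?_, by simpa using hFγp⟩
  have hshift := (hF.fiberLift 1 θ).map_sub_int (-γ θ) k
  simp only [IsQpfLift.fiberLift_apply, fiberIter_one] at hshift
  simp only [one_nsmul, fiberIter_one, hshift]
  linarith [hFγ θ]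

/-- Proposition 4.1, two-sided case: if `ρ(F) = 0`, there is an
`F`-invariant strip, and the rotation number is locked on both sides, then some iterate
of `F` maps a compact annular region bounded by continuous curves into its own interior. -/
theorem mode_locking_curves
    (ω : ℝ) (hω : Irrational ω)
    (F : T1 → ℝ → ℝ) (hF : IsQpfLift ω F)
    (hρ : HasRotNum ω F 0)
    (hstrip : ∃ A : Set (T1 × ℝ), IsInvStrip ω F A)
    (ε : ℝ) (hε : 0 < ε)
    (hlockp : HasRotNum ω (fun θ x => F θ x + ε) 0)
    (hlockm : HasRotNum ω (fun θ x => F θ x + (-ε)) 0) :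
    ∃ (N : ℕ), 1 ≤ N ∧ ∃ γm γp : T1 → ℝ,
      Continuous γm ∧ Continuous γp ∧ (∀ θ, γm θ < γp θ) ∧
      (∀ θ, γm (θ + N • (ω : T1)) < fiberIter ω F N θ (γm θ)) ∧
      (∀ θ, fiberIter ω F N θ (γp θ) < γp (θ + N • (ω : T1))) :=
  mode_locking_curves_general ω hω F hF hstrip ε hε hlockp hlockm
end
end

section
/- Let f be a quasiperiodically forced circle homeomorphism over an irrational ω with lift F, and let A be a minimal F-invariant strip. Suppose there exists δ > 0 such that every minimal F-invariant strip B with A ≺ B satisfies φ⁻_B(θ) − φ⁺_A(θ) ≥ δ for all θ ∈ T¹. Then there exists a unique minimal F-invariant strip B with A ≺ B such that there is no F-invariant strip S with A ≺ S ≺ B. -/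
open Filter Topology MeasureTheory
open scoped ENNReal

noncomputable section

/-- Upper bounding graph `φ⁺_A(θ) = sup A_θ`. -/
def phiSup (A : Set (T1 × ℝ)) (θ : T1) : ℝ := sSup {x : ℝ | (θ, x) ∈ A}

/-- Lower bounding graph `φ⁻_A(θ) = inf A_θ`. -/
def phiInf (A : Set (T1 × ℝ)) (θ : T1) : ℝ := sInf {x : ℝ | (θ, x) ∈ A}

/-- `A ≺ B`: the strip `A` lies strictly below the strip `B`. -/
def StripLt (A B : Set (T1 × ℝ)) : Prop := ∀ θ, phiSup A θ < phiInf B θ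

/-- A minimal invariant strip: one not strictly containing another invariant strip. -/
def IsMinimalStrip (ω : ℝ) (F : T1 → ℝ → ℝ) (A : Set (T1 × ℝ)) : Prop :=
  IsInvStrip ω F A ∧ ∀ S : Set (T1 × ℝ), IsInvStrip ω F S → S ⊆ A → S = A

/-!
Minimal strips above `A` are pairwise comparable: the projection of the intersection of a
minimal strip with an invariant strip is a closed set invariant under the irrational rotation,
so either the two are disjoint (and then ordered, the circle being connected) or the minimal
strip lies inside the other one.

It remains to find a least minimal strip above `A`. For each such `B`, the fiberwise convex
hull of the closure of the part of `⋃ {minimal strips above A}` lying below `B` is an invariant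
strip between `A + δ` and `B`. These hulls form a chain, so their intersection is an invariant
strip lying at distance at least `δ` above `A`, hence strictly above `A` by minimality of `A`.
A minimal strip inside this intersection lies below every minimal strip above `A`.
-/

open Set
open scoped Pointwise

theorem Irrational.eq_univ_of_isClosed_of_add_mem_iff {ω : ℝ} (hω : Irrational ω) {S : Set T1}
    (hS : IsClosed S) (hne : S.Nonempty) (hinv : ∀ θ, θ + (ω : T1) ∈ S ↔ θ ∈ S) :
    S = univ := by
  obtain ⟨θ₀, hθ₀⟩ := hne
  have horbit : ∀ n : ℤ, θ₀ + n • (ω : T1) ∈ S := by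
    intro n
    induction n using Int.induction_on with
    | zero => simpa using hθ₀
    | succ n ih => rwa [add_smul, one_smul, ← add_assoc, hinv]
    | pred n ih => rwa [← hinv, sub_smul, one_smul, add_assoc, sub_add_cancel]
  have hdense : DenseRange fun n : ℤ => θ₀ + n • (ω : T1) :=
    (Homeomorph.addLeft θ₀).surjective.denseRange.comp
      (AddCircle.denseRange_zsmul_coe_iff.2 (by simpa using hω)) (Homeomorph.addLeft θ₀).continuous
  refine eq_univ_of_univ_subset ?_
  rw [← hdense.closure_eq]
  exact hS.closure_subset_iff.2 (range_subset_iff.2 horbit)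

variable {ω : ℝ} {F : T1 → ℝ → ℝ}


def FiberLE (c : ℝ) (q p : T1 × ℝ) : Prop := q.1 = p.1 ∧ q.2 + c ≤ p.2

def upperRegion (K : Set (T1 × ℝ)) (c : ℝ) : Set (T1 × ℝ) := {p | ∃ q ∈ K, FiberLE c q p}

def lowerRegion (K : Set (T1 × ℝ)) : Set (T1 × ℝ) := {p | ∃ q ∈ K, FiberLE 0 p q}

def vHull (K : Set (T1 × ℝ)) : Set (T1 × ℝ) := upperRegion K 0 ∩ lowerRegion K

section Regions

variable {K L : Set (T1 × ℝ)} {c : ℝ}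

theorem FiberLE.trans {c d : ℝ} {p q r : T1 × ℝ} (h₁ : FiberLE c p q) (h₂ : FiberLE d q r) :
    FiberLE (c + d) p r :=
  ⟨h₁.1.trans h₂.1, by linarith [h₁.2, h₂.2]⟩

theorem FiberLE.refl (p : T1 × ℝ) : FiberLE 0 p p := ⟨rfl, by simp⟩

theorem upperRegion_eq_add : upperRegion K c = K + ({(0 : T1)} ×ˢ Ici c : Set (T1 × ℝ)) := by
  ext p
  constructor
  · rintro ⟨q, hq, h1, h2⟩
    exact ⟨q, hq, (0, p.2 - q.2), ⟨rfl, show c ≤ p.2 - q.2 by linarith⟩,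
      Prod.ext (by simp [h1]) (by simp)⟩
  · rintro ⟨q, hq, ⟨v₁, v₂⟩, ⟨rfl : v₁ = 0, hv : c ≤ v₂⟩, rfl⟩
    exact ⟨q, hq, by simp, by simpa using hv⟩

theorem lowerRegion_eq_add : lowerRegion K = K + ({(0 : T1)} ×ˢ Iic 0 : Set (T1 × ℝ)) := by
  ext p
  constructor
  · rintro ⟨q, hq, h1, h2⟩
    exact ⟨q, hq, (0, p.2 - q.2), ⟨rfl, show p.2 - q.2 ≤ 0 by linarith⟩,
      Prod.ext (by simp [h1]) (by simp)⟩
  · rintro ⟨q, hq, ⟨v₁, v₂⟩, ⟨rfl : v₁ = 0, hv : v₂ ≤ 0⟩, rfl⟩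
    exact ⟨q, hq, by simp, by simpa using hv⟩

theorem IsCompact.isClosed_upperRegion (hK : IsCompact K) : IsClosed (upperRegion K c) :=
  upperRegion_eq_add ▸ (isClosed_singleton.prod isClosed_Ici).add_left_of_isCompact hK

theorem IsCompact.isClosed_lowerRegion (hK : IsCompact K) : IsClosed (lowerRegion K) :=
  lowerRegion_eq_add ▸ (isClosed_singleton.prod isClosed_Iic).add_left_of_isCompact hK

theorem subset_upperRegion : K ⊆ upperRegion K 0 := fun p hp => ⟨p, hp, .refl p⟩

theorem subset_lowerRegion : K ⊆ lowerRegion K := fun p hp => ⟨p, hp, .refl p⟩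

theorem subset_vHull : K ⊆ vHull K := subset_inter subset_upperRegion subset_lowerRegion

theorem vHull_mono (h : K ⊆ L) : vHull K ⊆ vHull L :=
  inter_subset_inter (fun _ ⟨q, hq, hqp⟩ => ⟨q, h hq, hqp⟩) (fun _ ⟨q, hq, hpq⟩ => ⟨q, h hq, hpq⟩)

theorem upperRegion_subset_of_subset (h : L ⊆ upperRegion K c) :
    upperRegion L 0 ⊆ upperRegion K c := by
  rintro p ⟨q, hq, hqp⟩
  obtain ⟨r, hr, hrq⟩ := h hq
  exact ⟨r, hr, by simpa using hrq.trans hqp⟩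

theorem lowerRegion_subset_of_subset (h : L ⊆ lowerRegion K) : lowerRegion L ⊆ lowerRegion K := by
  rintro p ⟨q, hq, hpq⟩
  obtain ⟨r, hr, hqr⟩ := h hq
  exact ⟨r, hr, by simpa using hpq.trans hqr⟩

theorem vHull_subset {L' : Set (T1 × ℝ)} (hU : K ⊆ upperRegion L c) (hD : K ⊆ lowerRegion L') :
    vHull K ⊆ upperRegion L c ∩ lowerRegion L' :=
  inter_subset_inter (upperRegion_subset_of_subset hU) (lowerRegion_subset_of_subset hD)

theorem upperRegion_inter_lowerRegion_subset_vHull (hc : 0 ≤ c) :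
    upperRegion K c ∩ lowerRegion L ⊆ vHull (K ∪ L) := by
  rintro p ⟨⟨q, hq, hqp⟩, ⟨r, hr, hpr⟩⟩
  exact ⟨⟨q, .inl hq, hqp.1, by linarith [hqp.2]⟩, ⟨r, .inr hr, hpr⟩⟩

theorem IsCompact.vHull (hK : IsCompact K) : IsCompact (vHull K) := by
  obtain ⟨a, ha⟩ := (hK.image continuous_snd).bddBelow
  obtain ⟨b, hb⟩ := (hK.image continuous_snd).bddAbove
  refine (isCompact_univ.prod (isCompact_Icc (a := a) (b := b))).of_isClosed_subset
    (hK.isClosed_upperRegion.inter hK.isClosed_lowerRegion) ?_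
  rintro p ⟨⟨q, hq, hqp⟩, ⟨r, hr, hpr⟩⟩
  exact ⟨trivial, by linarith [ha ⟨q, hq, rfl⟩, hqp.2], by linarith [hb ⟨r, hr, rfl⟩, hpr.2]⟩

end Regions
namespace IsQpfLift

theorem continuous_skew (hF : IsQpfLift ω F) : Continuous (skew ω F) :=
  (continuous_fst.add continuous_const).prodMk hF.cont

theorem skew_injective (hF : IsQpfLift ω F) : Function.Injective (skew ω F) := by
  rintro ⟨θ, x⟩ ⟨θ', x'⟩ h
  obtain ⟨hθ, hx⟩ := Prod.mk.inj h
  obtain rfl : θ = θ' := add_right_cancel hθ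
  exact Prod.ext rfl ((hF.mono θ).injective hx)

theorem skew_surjective (hF : IsQpfLift ω F) : Function.Surjective (skew ω F) := by
  rintro ⟨θ, y⟩
  obtain ⟨x, hx⟩ := hF.surj (θ - ω) y
  exact ⟨(θ - ω, x), by simp [skew, hx]⟩

theorem map_add_nat (hF : IsQpfLift ω F) (θ : T1) (x : ℝ) (k : ℕ) : F θ (x + k) = F θ x + k := by
  induction k with
  | zero => simp
  | succ k ih => rw [Nat.cast_succ, ← add_assoc, hF.per, ih, add_assoc]

theorem skew_mem_iff (hF : IsQpfLift ω F) {X : Set (T1 × ℝ)} (hX : skew ω F '' X = X)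
    {p : T1 × ℝ} : skew ω F p ∈ X ↔ p ∈ X := by
  conv_lhs => rw [← hX]
  exact hF.skew_injective.mem_set_image

theorem fiberLE_skew_iff (hF : IsQpfLift ω F) {p q : T1 × ℝ} :
    FiberLE 0 (skew ω F q) (skew ω F p) ↔ FiberLE 0 q p := by
  simp only [FiberLE, skew, add_zero, add_left_inj]
  refine and_congr_right fun h => ?_
  rw [h]
  exact (hF.mono p.1).le_iff_le

theorem skew_image_upperRegion (hF : IsQpfLift ω F) (K : Set (T1 × ℝ)) :
    skew ω F '' upperRegion K 0 = upperRegion (skew ω F '' K) 0 := by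
  ext p
  obtain ⟨p, rfl⟩ := hF.skew_surjective p
  simp only [hF.skew_injective.mem_set_image, upperRegion, mem_ofPred_eq, exists_mem_image,
    hF.fiberLE_skew_iff]

theorem skew_image_lowerRegion (hF : IsQpfLift ω F) (K : Set (T1 × ℝ)) :
    skew ω F '' lowerRegion K = lowerRegion (skew ω F '' K) := by
  ext p
  obtain ⟨p, rfl⟩ := hF.skew_surjective p
  simp only [hF.skew_injective.mem_set_image, lowerRegion, mem_ofPred_eq, exists_mem_image,
    hF.fiberLE_skew_iff]

theorem skew_image_vHull (hF : IsQpfLift ω F) (K : Set (T1 × ℝ)) :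
    skew ω F '' vHull K = vHull (skew ω F '' K) := by
  rw [vHull, image_inter hF.skew_injective, hF.skew_image_upperRegion, hF.skew_image_lowerRegion,
    vHull]

end IsQpfLift

theorem add_mem_fst_image_iff {W : Set (T1 × ℝ)} (hW : skew ω F '' W = W) (θ : T1) :
    θ + (ω : T1) ∈ Prod.fst '' W ↔ θ ∈ Prod.fst '' W := by
  nth_rewrite 1 [← hW]
  simp only [image_image, skew, mem_image, add_left_inj]

theorem image_closure_eq_of_isCompact {X : Type*} [TopologicalSpace X] [T2Space X] {f : X → X}
    (hf : Continuous f) {S : Set X} (hS : f '' S = S) (hc : IsCompact (closure S)) :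
    f '' closure S = closure S := by
  refine subset_antisymm ?_ (closure_minimal ?_ (hc.image hf).isClosed)
  · simpa only [hS] using image_closure_subset_closure_image (s := S) hf
  · simpa only [hS] using image_mono (f := f) (subset_closure (s := S))

namespace IsInvStrip

variable {X Y : Set (T1 × ℝ)}

theorem fiber_eq_Icc (hX : IsInvStrip ω F X) (θ : T1) :
    {x | (θ, x) ∈ X} = Icc (phiInf X θ) (phiSup X θ) := by
  obtain ⟨a, b, hab, h⟩ := hX.2.2 θ
  rw [phiInf, phiSup, h, csInf_Icc hab, csSup_Icc hab]

theorem ordConnected_fiber (hX : IsInvStrip ω F X) (θ : T1) : OrdConnected {x | (θ, x) ∈ X} :=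
  hX.fiber_eq_Icc θ ▸ ordConnected_Icc

theorem mem_iff (hX : IsInvStrip ω F X) {θ : T1} {x : ℝ} :
    (θ, x) ∈ X ↔ phiInf X θ ≤ x ∧ x ≤ phiSup X θ :=
  Set.ext_iff.1 (hX.fiber_eq_Icc θ) x

theorem phiInf_le_phiSup (hX : IsInvStrip ω F X) (θ : T1) : phiInf X θ ≤ phiSup X θ := by
  obtain ⟨a, b, hab, h⟩ := hX.2.2 θ
  rwa [phiInf, phiSup, h, csInf_Icc hab, csSup_Icc hab]

theorem phiInf_mem (hX : IsInvStrip ω F X) (θ : T1) : (θ, phiInf X θ) ∈ X :=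
  hX.mem_iff.2 ⟨le_rfl, hX.phiInf_le_phiSup θ⟩

theorem phiSup_mem (hX : IsInvStrip ω F X) (θ : T1) : (θ, phiSup X θ) ∈ X :=
  hX.mem_iff.2 ⟨hX.phiInf_le_phiSup θ, le_rfl⟩

theorem phiInf_le_phiInf_of_subset (hX : IsInvStrip ω F X) (hY : IsInvStrip ω F Y) (h : Y ⊆ X)
    (θ : T1) : phiInf X θ ≤ phiInf Y θ :=
  (hX.mem_iff.1 (h (hY.phiInf_mem θ))).1

theorem phiSup_le_phiSup_of_subset (hX : IsInvStrip ω F X) (hY : IsInvStrip ω F Y) (h : Y ⊆ X)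
    (θ : T1) : phiSup Y θ ≤ phiSup X θ :=
  (hX.mem_iff.1 (h (hY.phiSup_mem θ))).2

end IsInvStrip

theorem isInvStrip_of_fibers {X : Set (T1 × ℝ)} (hX : IsCompact X) (hinv : skew ω F '' X = X)
    (hne : ∀ θ, ∃ x, (θ, x) ∈ X) (hoc : ∀ θ, OrdConnected {x | (θ, x) ∈ X}) :
    IsInvStrip ω F X := by
  refine ⟨hX, hinv, fun θ => ?_⟩
  have hc : IsCompact {x | (θ, x) ∈ X} := (hX.image continuous_snd).of_isClosed_subset
    (hX.isClosed.preimage (Continuous.prodMk_right θ)) fun x hx => ⟨_, hx, rfl⟩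
  obtain ⟨x, hx⟩ := hne θ
  exact ⟨_, _, csInf_le_csSup (s := {x | (θ, x) ∈ X}) ⟨x, hx⟩ hc.bddBelow hc.bddAbove,
    eq_Icc_of_connected_compact ⟨⟨x, hx⟩, (hoc θ).isPreconnected⟩ hc⟩

section Order

variable {X Y Z : Set (T1 × ℝ)}

theorem StripLt.mono_right (h : StripLt X Y) (hY : IsInvStrip ω F Y) (hZ : IsInvStrip ω F Z)
    (hZY : Z ⊆ Y) : StripLt X Z :=
  fun θ => (h θ).trans_le (hY.phiInf_le_phiInf_of_subset hZ hZY θ)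

theorem StripLt.mono_left (h : StripLt X Y) (hX : IsInvStrip ω F X) (hZ : IsInvStrip ω F Z)
    (hZX : Z ⊆ X) : StripLt Z Y :=
  fun θ => (hX.phiSup_le_phiSup_of_subset hZ hZX θ).trans_lt (h θ)

theorem IsInvStrip.not_stripLt_self (hX : IsInvStrip ω F X) : ¬ StripLt X X :=
  fun h => (h 0).not_ge (hX.phiInf_le_phiSup 0)

theorem StripLt.not_stripLt (h : StripLt X Y) (hX : IsInvStrip ω F X) (hY : IsInvStrip ω F Y) :
    ¬ StripLt Y X :=
  fun h' => by linarith [h 0, h' 0, hX.phiInf_le_phiSup 0, hY.phiInf_le_phiSup 0]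

theorem StripLt.subset_lowerRegion (h : StripLt X Y) (hX : IsInvStrip ω F X)
    (hY : IsInvStrip ω F Y) : X ⊆ lowerRegion Y :=
  fun p hp => ⟨(p.1, phiInf Y p.1), hY.phiInf_mem p.1, rfl,
    by linarith [(hX.mem_iff.1 hp).2, h p.1]⟩

theorem IsInvStrip.not_stripLt_of_subset_lowerRegion (hX : IsInvStrip ω F X)
    (hY : IsInvStrip ω F Y) (h : X ⊆ lowerRegion Y) : ¬ StripLt Y X := by
  intro hYX
  obtain ⟨⟨θ, y⟩, hy, hθ : 0 = θ, hle⟩ := h (hX.phiInf_mem 0)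
  subst hθ
  linarith [hYX 0, (hY.mem_iff.1 hy).2, hle]

theorem IsInvStrip.isOpen_setOf_phiSup_lt_phiInf (hX : IsInvStrip ω F X)
    (hY : IsInvStrip ω F Y) : IsOpen {θ | phiSup X θ < phiInf Y θ} := by
  have hcompl : {θ | phiSup X θ < phiInf Y θ}ᶜ = (fun z : (T1 × ℝ) × (T1 × ℝ) => z.1.1) ''
      (X ×ˢ Y ∩ ({z | z.1.1 = z.2.1} ∩ {z | z.2.2 ≤ z.1.2})) := by
    ext θ
    simp only [mem_compl_iff, mem_ofPred_eq, not_lt]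
    constructor
    · intro h
      exact ⟨((θ, phiSup X θ), (θ, phiInf Y θ)), ⟨⟨hX.phiSup_mem θ, hY.phiInf_mem θ⟩, rfl, h⟩, rfl⟩
    · rintro ⟨⟨⟨θ, x⟩, ⟨θ', y⟩⟩, ⟨⟨hx, hy⟩, hθ : θ = θ', hyx : y ≤ x⟩, rfl⟩
      subst hθ
      exact (hY.mem_iff.1 hy).1.trans (hyx.trans (hX.mem_iff.1 hx).2)
  rw [← isClosed_compl_iff, hcompl]
  refine (((hX.1.prod hY.1).inter_right ?_).image (by fun_prop)).isClosed
  exact (isClosed_eq (by fun_prop) (by fun_prop)).inter (isClosed_le (by fun_prop) (by fun_prop))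

theorem IsInvStrip.stripLt_or_stripLt_of_disjoint (hX : IsInvStrip ω F X)
    (hY : IsInvStrip ω F Y) (h : Disjoint X Y) : StripLt X Y ∨ StripLt Y X := by
  have hsplit : ∀ θ, phiSup X θ < phiInf Y θ ∨ phiSup Y θ < phiInf X θ := by
    intro θ
    by_contra! hθ
    have hX' := hX.phiInf_le_phiSup θ
    have hY' := hY.phiInf_le_phiSup θ
    exact disjoint_left.1 h
      ((hX.mem_iff (x := max (phiInf X θ) (phiInf Y θ))).2 ⟨le_max_left _ _, max_le hX' hθ.1⟩)
      (hY.mem_iff.2 ⟨le_max_right _ _, max_le hθ.2 hY'⟩)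
  have hcompl : {θ | phiSup X θ < phiInf Y θ}ᶜ = {θ | phiSup Y θ < phiInf X θ} := by
    ext θ
    refine ⟨(hsplit θ).resolve_left, fun (h₁ : phiSup Y θ < phiInf X θ) (h₂ : phiSup X θ < _) => ?_⟩
    linarith [hX.phiInf_le_phiSup θ, hY.phiInf_le_phiSup θ]
  rcases isClopen_iff.1 ⟨isOpen_compl_iff.1 (hcompl ▸ hY.isOpen_setOf_phiSup_lt_phiInf hX),
    hX.isOpen_setOf_phiSup_lt_phiInf hY⟩ with hU | hU
  · exact Or.inr fun θ => (hsplit θ).resolve_left (eq_empty_iff_forall_notMem.1 hU θ)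
  · exact Or.inl fun θ => eq_univ_iff_forall.1 hU θ

end Order

section Strips

variable {X Y : Set (T1 × ℝ)}

theorem IsInvStrip.inter (hF : IsQpfLift ω F) (hX : IsInvStrip ω F X) (hY : IsInvStrip ω F Y)
    (h : ∀ θ, ∃ x, (θ, x) ∈ X ∩ Y) : IsInvStrip ω F (X ∩ Y) := by
  refine isInvStrip_of_fibers (hX.1.inter_right hY.1.isClosed)
    (by rw [image_inter hF.skew_injective, hX.2.1, hY.2.1]) h fun θ => ?_
  exact (hX.ordConnected_fiber θ).inter (hY.ordConnected_fiber θ)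

theorem isInvStrip_sInter_of_isChain (hF : IsQpfLift ω F) {c : Set (Set (T1 × ℝ))}
    (hne : c.Nonempty) (hchain : IsChain (· ⊆ ·) c) (hc : ∀ X ∈ c, IsInvStrip ω F X) :
    IsInvStrip ω F (⋂₀ c) := by
  obtain ⟨X₀, hX₀⟩ := hne
  have : Nonempty c := ⟨⟨X₀, hX₀⟩⟩
  refine isInvStrip_of_fibers ((hc X₀ hX₀).1.of_isClosed_subset
    (isClosed_sInter fun X hX => (hc X hX).1.isClosed) (sInter_subset_of_mem hX₀)) ?_
    (fun θ => ?_) fun θ => ?_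
  · ext q
    obtain ⟨p, rfl⟩ := hF.skew_surjective q
    simp only [hF.skew_injective.mem_set_image, mem_sInter]
    exact forall₂_congr fun X hX => (hF.skew_mem_iff (hc X hX).2.1).symm
  · have hdir : Directed (· ⊇ ·) fun X : c => {x | (θ, x) ∈ (X : Set (T1 × ℝ))} := fun X Y =>
      (hchain.total X.2 Y.2).elim (fun h => ⟨X, subset_rfl, fun _ hx => h hx⟩)
        fun h => ⟨Y, fun _ hx => h hx, subset_rfl⟩
    obtain ⟨x, hx⟩ := IsCompact.nonempty_iInter_of_directed_nonempty_isCompact_isClosed _ hdir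
      (fun X => ⟨_, (hc X X.2).phiInf_mem θ⟩)
      (fun X => (hc X X.2).fiber_eq_Icc θ ▸ isCompact_Icc)
      (fun X => (hc X X.2).fiber_eq_Icc θ ▸ isClosed_Icc)
    exact ⟨x, mem_sInter.2 fun X hX => mem_iInter.1 hx ⟨X, hX⟩⟩
  · change OrdConnected (Prod.mk θ ⁻¹' ⋂₀ c)
    rw [preimage_sInter]
    exact ordConnected_biInter fun X hX => (hc X hX).ordConnected_fiber θ

theorem IsInvStrip.exists_isMinimalStrip_subset (hF : IsQpfLift ω F) (hX : IsInvStrip ω F X) :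
    ∃ B, IsMinimalStrip ω F B ∧ B ⊆ X := by
  obtain ⟨m, hm⟩ := zorn_superset {Y | IsInvStrip ω F Y ∧ Y ⊆ X} fun c hc hchain => by
    rcases c.eq_empty_or_nonempty with rfl | ⟨Y₀, hY₀⟩
    · exact ⟨X, ⟨hX, subset_rfl⟩, by simp⟩
    · exact ⟨⋂₀ c, ⟨isInvStrip_sInter_of_isChain hF ⟨Y₀, hY₀⟩ hchain fun Y hY => (hc hY).1,
        (sInter_subset_of_mem hY₀).trans (hc hY₀).2⟩, fun _ => sInter_subset_of_mem⟩
  exact ⟨m, ⟨hm.prop.1, fun S hS hSm =>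
    subset_antisymm hSm (hm.le_of_le ⟨hS, hSm.trans hm.prop.2⟩ hSm)⟩, hm.prop.2⟩

theorem IsInvStrip.exists_isMinimalStrip_above (hF : IsQpfLift ω F) (hX : IsInvStrip ω F X) :
    ∃ B, IsMinimalStrip ω F B ∧ StripLt X B := by
  obtain ⟨a, ha⟩ := (hX.1.image continuous_snd).bddBelow
  obtain ⟨b, hb⟩ := (hX.1.image continuous_snd).bddAbove
  obtain ⟨k, hk⟩ := exists_nat_gt (b - a)
  set τ : T1 × ℝ → T1 × ℝ := fun p => (p.1, p.2 + k)
  have hfib : ∀ θ, {x | (θ, x) ∈ τ '' X} = Icc (phiInf X θ + k) (phiSup X θ + k) := by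
    intro θ
    ext x
    constructor
    · rintro ⟨⟨θ', y⟩, hy, hyx⟩
      obtain ⟨rfl, rfl⟩ := Prod.mk.inj hyx
      exact ⟨by linarith [(hX.mem_iff.1 hy).1], by linarith [(hX.mem_iff.1 hy).2]⟩
    · rintro ⟨h₁, h₂⟩
      exact ⟨(θ, x - k), hX.mem_iff.2 ⟨by linarith, by linarith⟩, by simp [τ]⟩
  have hT : IsInvStrip ω F (τ '' X) := by
    refine ⟨hX.1.image (by fun_prop), ?_, fun θ => ⟨_, _, ?_, hfib θ⟩⟩
    · have hcomm : ∀ p, skew ω F (τ p) = τ (skew ω F p) :=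
        fun p => Prod.ext rfl (hF.map_add_nat p.1 p.2 k)
      rw [image_comm hcomm, hX.2.1]
    · linarith [hX.phiInf_le_phiSup θ]
  obtain ⟨B, hB, hBT⟩ := hT.exists_isMinimalStrip_subset hF
  refine ⟨B, hB, StripLt.mono_right (fun θ => ?_) hT hB.1 hBT⟩
  rw [phiInf, hfib, csInf_Icc (by linarith [hX.phiInf_le_phiSup θ])]
  linarith [ha ⟨_, hX.phiInf_mem θ, rfl⟩, hb ⟨_, hX.phiSup_mem θ, rfl⟩]

namespace IsMinimalStrip

theorem subset_or_disjoint (hω : Irrational ω) (hF : IsQpfLift ω F) (hX : IsMinimalStrip ω F X)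
    (hY : IsInvStrip ω F Y) : X ⊆ Y ∨ Disjoint X Y := by
  rcases (X ∩ Y).eq_empty_or_nonempty with h | hne
  · exact Or.inr (disjoint_iff_inter_eq_empty.2 h)
  have hinv : skew ω F '' (X ∩ Y) = X ∩ Y := by
    rw [image_inter hF.skew_injective, hX.1.2.1, hY.2.1]
  have hproj : Prod.fst '' (X ∩ Y) = univ :=
    hω.eq_univ_of_isClosed_of_add_mem_iff
      ((hX.1.1.inter_right hY.1.isClosed).image continuous_fst).isClosed (hne.image _)
      (add_mem_fst_image_iff hinv)
  have hfib : ∀ θ, ∃ x, (θ, x) ∈ X ∩ Y := fun θ => by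
    obtain ⟨p, hp, rfl⟩ := hproj.symm ▸ mem_univ θ
    exact ⟨p.2, hp⟩
  exact Or.inl ((hX.2 _ (hX.1.inter hF hY hfib) inter_subset_left) ▸ inter_subset_right)

theorem eq_or_stripLt_or_stripLt (hω : Irrational ω) (hF : IsQpfLift ω F)
    (hX : IsMinimalStrip ω F X) (hY : IsMinimalStrip ω F Y) :
    X = Y ∨ StripLt X Y ∨ StripLt Y X :=
  (hX.subset_or_disjoint hω hF hY.1).imp (hY.2 X hX.1)
    (hX.1.stripLt_or_stripLt_of_disjoint hY.1)

end IsMinimalStrip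

end Strips

section Hull

variable {K V A B : Set (T1 × ℝ)} {c : ℝ}

theorem isInvStrip_vHull (hF : IsQpfLift ω F) (hK : IsCompact K) (hinv : skew ω F '' K = K)
    (hne : ∀ θ, ∃ x, (θ, x) ∈ K) : IsInvStrip ω F (vHull K) := by
  refine isInvStrip_of_fibers hK.vHull (by rw [hF.skew_image_vHull, hinv])
    (fun θ => (hne θ).imp fun _ hx => subset_vHull hx) fun θ => ⟨?_⟩
  rintro x ⟨⟨q, hq, hqx⟩, -⟩ y ⟨-, ⟨r, hr, hyr⟩⟩ z hz
  exact ⟨⟨q, hq, hqx.1, by linarith [hqx.2, hz.1]⟩, ⟨r, hr, hyr.1, by linarith [hyr.2, hz.2]⟩⟩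

theorem isInvStrip_vHull_closure (hF : IsQpfLift ω F) (hV : skew ω F '' V = V)
    (hK : IsCompact K) (hVK : V ⊆ K) (hne : ∀ θ, ∃ x, (θ, x) ∈ V) :
    IsInvStrip ω F (vHull (closure V)) := by
  have hc : IsCompact (closure V) :=
    hK.of_isClosed_subset isClosed_closure (closure_minimal hVK hK.isClosed)
  exact isInvStrip_vHull hF hc (image_closure_eq_of_isCompact hF.continuous_skew hV hc)
    fun θ => (hne θ).imp fun _ hx => subset_closure hx

def hullBelow (𝓕 : Set (Set (T1 × ℝ))) (B : Set (T1 × ℝ)) : Set (T1 × ℝ) :=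
  vHull (closure (⋃₀ 𝓕 ∩ lowerRegion B))

theorem hullBelow_mono {𝓕 : Set (Set (T1 × ℝ))} (h : lowerRegion A ⊆ lowerRegion B) :
    hullBelow 𝓕 A ⊆ hullBelow 𝓕 B :=
  vHull_mono (closure_mono (inter_subset_inter_right _ h))

theorem hullBelow_subset {𝓕 : Set (Set (T1 × ℝ))} (hA : IsCompact A) (hB : IsCompact B)
    (h𝓕 : ⋃₀ 𝓕 ⊆ upperRegion A c) : hullBelow 𝓕 B ⊆ upperRegion A c ∩ lowerRegion B := by
  have h := closure_minimal (inter_subset_inter_left _ h𝓕)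
    (hA.isClosed_upperRegion.inter hB.isClosed_lowerRegion)
  exact vHull_subset (h.trans inter_subset_left) (h.trans inter_subset_right)

theorem isInvStrip_hullBelow (hF : IsQpfLift ω F) {𝓕 : Set (Set (T1 × ℝ))}
    (h𝓕 : ∀ X ∈ 𝓕, IsInvStrip ω F X) (hA : IsCompact A) (hc : 0 ≤ c)
    (hA𝓕 : ⋃₀ 𝓕 ⊆ upperRegion A c) (hB : B ∈ 𝓕) : IsInvStrip ω F (hullBelow 𝓕 B) := by
  have hB' := h𝓕 B hB
  have hinv : skew ω F '' (⋃₀ 𝓕 ∩ lowerRegion B) = ⋃₀ 𝓕 ∩ lowerRegion B := by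
    rw [image_inter hF.skew_injective, hF.skew_image_lowerRegion, hB'.2.1, sUnion_eq_biUnion,
      image_iUnion₂, iUnion₂_congr fun X hX => (h𝓕 X hX).2.1]
  refine isInvStrip_vHull_closure hF hinv (hA.union hB'.1).vHull ?_ fun θ =>
    ⟨_, subset_sUnion_of_mem hB (hB'.phiInf_mem θ), subset_lowerRegion (hB'.phiInf_mem θ)⟩
  exact (inter_subset_inter_left _ hA𝓕).trans (upperRegion_inter_lowerRegion_subset_vHull hc)

end Hull

namespace IsMinimalStrip

variable {A : Set (T1 × ℝ)} {δ : ℝ}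

theorem stripLt_of_subset_upperRegion (hω : Irrational ω) (hF : IsQpfLift ω F)
    (hA : IsMinimalStrip ω F A) {C : Set (T1 × ℝ)} (hC : IsInvStrip ω F C) (hδ : 0 < δ)
    (h : C ⊆ upperRegion A δ) : StripLt A C := by
  have hlow : ∀ θ, phiInf A θ + δ ≤ phiInf C θ := fun θ => by
    obtain ⟨⟨θ', y⟩, hy, hθ : θ' = θ, hle⟩ := h (hC.phiInf_mem θ)
    subst hθ
    linarith [(hA.1.mem_iff.1 hy).1, hle]
  rcases hA.subset_or_disjoint hω hF hC with hAC | hAC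
  · linarith [hlow 0, (hC.mem_iff.1 (hAC (hA.1.phiInf_mem 0))).1]
  · refine (hA.1.stripLt_or_stripLt_of_disjoint hC hAC).resolve_right fun hCA => ?_
    linarith [hCA 0, hlow 0, hC.phiInf_le_phiSup 0]

theorem exists_least_isMinimalStrip_above (hω : Irrational ω) (hF : IsQpfLift ω F)
    (hA : IsMinimalStrip ω F A) (hδ : 0 < δ)
    (hgap : ∀ B, IsMinimalStrip ω F B → StripLt A B → B ⊆ upperRegion A δ) :
    ∃ C, IsMinimalStrip ω F C ∧ StripLt A C ∧
      ∀ B, IsMinimalStrip ω F B → StripLt A B → C = B ∨ StripLt C B := by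
  set Fam := {B | IsMinimalStrip ω F B ∧ StripLt A B}
  have hFam : ∀ X ∈ Fam, IsInvStrip ω F X := fun X hX => hX.1.1
  have hAFam : ⋃₀ Fam ⊆ upperRegion A δ := sUnion_subset fun X hX => hgap X hX.1 hX.2
  have hchain : IsChain (· ⊆ ·) (hullBelow Fam '' Fam) := by
    rintro _ ⟨B₁, h₁, rfl⟩ _ ⟨B₂, h₂, rfl⟩ -
    rcases h₁.1.eq_or_stripLt_or_stripLt hω hF h₂.1 with rfl | h | h
    · exact Or.inl subset_rfl
    · exact Or.inl (hullBelow_mono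
        (lowerRegion_subset_of_subset (h.subset_lowerRegion h₁.1.1 h₂.1.1)))
    · exact Or.inr (hullBelow_mono
        (lowerRegion_subset_of_subset (h.subset_lowerRegion h₂.1.1 h₁.1.1)))
  obtain ⟨B₀, hB₀⟩ := hA.1.exists_isMinimalStrip_above hF
  have hC : IsInvStrip ω F (⋂₀ (hullBelow Fam '' Fam)) :=
    isInvStrip_sInter_of_isChain hF ⟨_, mem_image_of_mem _ hB₀⟩ hchain <| forall_mem_image.2
      fun B hB => isInvStrip_hullBelow hF hFam hA.1.1 hδ.le hAFam hB
  have hCsub : ∀ B ∈ Fam, ⋂₀ (hullBelow Fam '' Fam) ⊆ upperRegion A δ ∩ lowerRegion B :=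
    fun B hB => (sInter_subset_of_mem (mem_image_of_mem _ hB)).trans
      (hullBelow_subset hA.1.1 hB.1.1.1 hAFam)
  obtain ⟨C, hCmin, hCsubC⟩ := hC.exists_isMinimalStrip_subset hF
  have hAC : StripLt A C := (hA.stripLt_of_subset_upperRegion hω hF hC hδ fun p hp =>
    (hCsub B₀ hB₀ hp).1).mono_right hC hCmin.1 hCsubC
  refine ⟨C, hCmin, hAC, fun B hB hAB => ?_⟩
  have hCB : C ⊆ lowerRegion B := fun p hp => (hCsub B ⟨hB, hAB⟩ (hCsubC hp)).2
  rcases hCmin.eq_or_stripLt_or_stripLt hω hF hB with h | h | h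
  · exact Or.inl h
  · exact Or.inr h
  · exact absurd h (hCmin.1.not_stripLt_of_subset_lowerRegion hB.1 hCB)

end IsMinimalStrip

theorem IsInvStrip.subset_upperRegion_of_forall_le {A B : Set (T1 × ℝ)} {δ : ℝ}
    (hA : IsInvStrip ω F A) (hB : IsInvStrip ω F B) (h : ∀ θ, δ ≤ phiInf B θ - phiSup A θ) :
    B ⊆ upperRegion A δ :=
  fun p hp => ⟨(p.1, phiSup A p.1), hA.phiSup_mem p.1, rfl,
    by linarith [h p.1, (hB.mem_iff.1 hp).1]⟩

/-- case (𝒜1) of the construction in the proof of Proposition 4.1: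
if every minimal invariant strip above `A` stays at distance at least `δ` from `A`, then
there is a unique minimal invariant strip directly above `A`, i.e. one with no invariant
strip strictly in between. -/
theorem unique_next_minimal_strip
    (ω : ℝ) (hω : Irrational ω)
    (F : T1 → ℝ → ℝ) (hF : IsQpfLift ω F)
    (A : Set (T1 × ℝ)) (hA : IsMinimalStrip ω F A)
    (δ : ℝ) (hδ : 0 < δ)
    (hdist : ∀ B : Set (T1 × ℝ), IsMinimalStrip ω F B → StripLt A B →
      ∀ θ : T1, δ ≤ phiInf B θ - phiSup A θ) :
    ∃! B : Set (T1 × ℝ), IsMinimalStrip ω F B ∧ StripLt A B ∧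
      ¬ ∃ S : Set (T1 × ℝ), IsInvStrip ω F S ∧ StripLt A S ∧ StripLt S B := by
  obtain ⟨C, hC, hAC, hleast⟩ := hA.exists_least_isMinimalStrip_above hω hF hδ
    fun B hB hAB => hA.1.subset_upperRegion_of_forall_le hB.1 (hdist B hB hAB)
  refine ⟨C, ⟨hC, hAC, ?_⟩, fun B ⟨hB, hAB, hnone⟩ => ?_⟩
  · rintro ⟨S, hS, hAS, hSC⟩
    obtain ⟨B, hB, hBS⟩ := hS.exists_isMinimalStrip_subset hF
    have hBC : StripLt B C := hSC.mono_left hS hB.1 hBS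
    rcases hleast B hB (hAS.mono_right hS hB.1 hBS) with rfl | hCB
    · exact hB.1.not_stripLt_self hBC
    · exact hCB.not_stripLt hC.1 hB.1 hBC
  · rcases hleast B hB hAB with h | h
    · exact h.symm
    · exact absurd ⟨C, hC.1, hAC, h⟩ hnone
end
end

section
/- Let f be a quasiperiodically forced circle homeomorphism over an irrational ω with lift F, let γ : T¹ → ℝ be continuous, and let N ≥ 1 be such that F^N_θ(γ(θ)) < γ(θ+Nω) for all θ (γ is mapped strictly below itself by the N-th iterate of F). Define γ₀ := γ and γ_{n+1}(θ) := F^N_{θ−Nω}(γ_n(θ−Nω)) for n ∈ ℕ, and assume inf_{n∈ℕ, θ∈T¹} γ_n(θ) > −∞. Then for each θ the sequence (γ_n(θ))_{n∈ℕ} is strictly decreasing and converges to a bounded upper semi-continuous function φ : T¹ → ℝ satisfying F^N_θ(φ(θ)) = φ(θ+Nω) and φ(θ) < γ(θ) for all θ. -/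
open Filter Topology MeasureTheory
open scoped ENNReal

noncomputable section

/-- The iterated images `γ_n` of a curve `γ` under the `N`-th iterate of the lift:
`γ_{n+1}(θ) = F^N_{θ-Nω}(γ_n(θ-Nω))`. -/
def curveIter (ω : ℝ) (F : T1 → ℝ → ℝ) (N : ℕ) (γ : T1 → ℝ) : ℕ → T1 → ℝ
  | 0 => γ
  | n + 1 => fun θ =>
      fiberIter ω F N (θ - N • (ω : T1)) (curveIter ω F N γ n (θ - N • (ω : T1)))

lemma fiberIter_mono (ω : ℝ) (F : T1 → ℝ → ℝ) (hF : IsQpfLift ω F) :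
    ∀ n θ, StrictMono (fiberIter ω F n θ) := by
  intro n
  induction n with
  | zero => intro θ; exact strictMono_id
  | succ n ih =>
    intro θ
    exact (ih (θ + (ω : T1))).comp (hF.mono θ)

lemma fiberIter_cont (ω : ℝ) (F : T1 → ℝ → ℝ) (hF : IsQpfLift ω F) :
    ∀ n, Continuous fun p : T1 × ℝ => fiberIter ω F n p.1 p.2 := by
  intro n
  induction n with
  | zero => exact continuous_snd
  | succ n ih =>
    exact ih.comp ((continuous_fst.add continuous_const).prodMk hF.cont)

lemma curveIter_cont (ω : ℝ) (F : T1 → ℝ → ℝ) (hF : IsQpfLift ω F)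
    (N : ℕ) (γ : T1 → ℝ) (hγ : Continuous γ) :
    ∀ n, Continuous (curveIter ω F N γ n) := by
  intro n
  induction n with
  | zero => exact hγ
  | succ n ih =>
    have hs : Continuous fun θ : T1 => θ - N • (ω : T1) :=
      continuous_id.sub continuous_const
    exact (fiberIter_cont ω F hF N).comp (hs.prodMk (ih.comp hs))

/-- used in case (𝒜1)(b): the iterates of a curve mapped strictly
below itself decrease to an invariant, bounded, upper semi-continuous graph. -/
theorem decreasing_curve_iterates_limit
    (ω : ℝ) (hω : Irrational ω)
    (F : T1 → ℝ → ℝ) (hF : IsQpfLift ω F)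
    (γ : T1 → ℝ) (hγ : Continuous γ)
    (N : ℕ) (hN : 1 ≤ N)
    (hbelow : ∀ θ, fiberIter ω F N θ (γ θ) < γ (θ + N • (ω : T1)))
    (hbdd : ∃ c : ℝ, ∀ (n : ℕ) (θ : T1), c ≤ curveIter ω F N γ n θ) :
    ∃ φ : T1 → ℝ,
      (∀ θ, StrictAnti fun n : ℕ => curveIter ω F N γ n θ) ∧
      (∀ θ, Tendsto (fun n : ℕ => curveIter ω F N γ n θ) atTop (𝓝 (φ θ))) ∧
      (∃ c C : ℝ, ∀ θ, c ≤ φ θ ∧ φ θ ≤ C) ∧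
      UpperSemicontinuous φ ∧
      (∀ θ, fiberIter ω F N θ (φ θ) = φ (θ + N • (ω : T1))) ∧
      (∀ θ, φ θ < γ θ) := by
  obtain ⟨c, hc⟩ := hbdd
  set G := curveIter ω F N γ with hG
  have step : ∀ n θ, G (n + 1) θ < G n θ := by
    intro n
    induction n with
    | zero =>
      intro θ
      have h := hbelow (θ - N • (ω : T1))
      simpa [hG, curveIter, fiberIter, sub_add_cancel] using h
    | succ n ih =>
      intro θ
      have := (fiberIter_mono ω F hF N (θ - N • (ω : T1))) (ih (θ - N • (ω : T1)))
      simpa [hG, curveIter] using this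
  have hanti : ∀ θ, StrictAnti fun n : ℕ => G n θ := fun θ =>
    strictAnti_nat_of_succ_lt fun n => step n θ
  have hbb : ∀ θ, BddBelow (Set.range fun n : ℕ => G n θ) := fun θ =>
    ⟨c, by rintro x ⟨n, rfl⟩; exact hc n θ⟩
  set φ : T1 → ℝ := fun θ => ⨅ n : ℕ, G n θ with hφ
  have htend : ∀ θ, Tendsto (fun n : ℕ => G n θ) atTop (𝓝 (φ θ)) := fun θ =>
    tendsto_atTop_ciInf (hanti θ).antitone (hbb θ)
  have hle : ∀ θ n, φ θ ≤ G n θ := fun θ n => ciInf_le (hbb θ) n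
  refine ⟨φ, hanti, htend, ?_, ?_, ?_, ?_⟩
  · obtain ⟨C, hC⟩ := (isCompact_range hγ).bddAbove
    refine ⟨c, C, fun θ => ⟨le_ciInf fun n => hc n θ, ?_⟩⟩
    exact le_trans (hle θ 0) (hC ⟨θ, rfl⟩)
  · intro θ y hy
    obtain ⟨n, hn⟩ := exists_lt_of_ciInf_lt hy
    have hcont := (curveIter_cont ω F hF N γ hγ n).continuousAt (x := θ)
    filter_upwards [hcont.eventually_lt_const hn] with θ' hθ'
    exact lt_of_le_of_lt (hle θ' n) hθ'
  · intro θ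
    have key : ∀ n : ℕ, G (n + 1) (θ + N • (ω : T1)) = fiberIter ω F N θ (G n θ) := by
      intro n
      simp [hG, curveIter, add_sub_cancel_right]
    have h1 : Tendsto (fun n : ℕ => G (n + 1) (θ + N • (ω : T1))) atTop
        (𝓝 (φ (θ + N • (ω : T1)))) :=
      (htend (θ + N • (ω : T1))).comp (tendsto_add_atTop_nat 1)
    have h2 : Tendsto (fun n : ℕ => fiberIter ω F N θ (G n θ)) atTop
        (𝓝 (fiberIter ω F N θ (φ θ))) := by
      have hcx : Continuous fun x : ℝ => fiberIter ω F N θ x :=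
        (fiberIter_cont ω F hF N).comp (continuous_const.prodMk continuous_id)
      exact (hcx.continuousAt.tendsto).comp (htend θ)
    exact (tendsto_nhds_unique h1 (by simpa only [key] using h2)).symm
  · intro θ
    exact lt_of_le_of_lt (hle θ 1) (step 0 θ)

end
end
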